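/- For nonnegative integers m, n, k with k ≤ m+n−2, the coefficient of s^{m−1} t^{n−1} in the polynomial (1+s)^m (1+t)^n (s+t)^k equals ∑_{i+j=k, i,j≥0} C(m, i+1) · C(n, j+1) · C(k, i). -/

import Mathlib

/-!
Expanding `(s + t)^k` binomially writes the polynomial as `∑ᵢ C(k,i) · ((1+s)^m sⁱ) · ((1+t)^n t^(k-i))`,
a sum of products of a polynomial in `s` and one in `t`, whose coefficients multiply. The
coefficient of `s^(m-1)` in `(1+s)^m sⁱ` is `C(m, m-1-i) = C(m, i+1)` (both vanish when `i ≥ m`).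
-/

open MvPolynomial Finset

section

variable {R σ : Type*} [CommSemiring R]

theorem Finsupp.single_add_single_inj {i j : σ} (hij : i ≠ j) {a b c d : ℕ} :
    Finsupp.single i a + Finsupp.single j b = Finsupp.single i c + Finsupp.single j d ↔
      a = c ∧ b = d := by
  constructor
  · intro h
    have hi := DFunLike.congr_fun h i
    have hj := DFunLike.congr_fun h j
    simp [hij, hij.symm] at hi hj
    exact ⟨hi, hj⟩
  · rintro ⟨rfl, rfl⟩
    rfl

theorem MvPolynomial.coeff_aeval_X_mul_aeval_X {i j : σ} (hij : i ≠ j) (p q : Polynomial R)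
    (a b : ℕ) :
    coeff (Finsupp.single i a + Finsupp.single j b)
        (Polynomial.aeval (X i) p * Polynomial.aeval (X j) q) = p.coeff a * q.coeff b := by
  induction p using Polynomial.induction_on' with
  | add p p' hp hp' => simp only [map_add, add_mul, coeff_add, hp, hp', Polynomial.coeff_add]
  | monomial c r =>
    induction q using Polynomial.induction_on' with
    | add q q' hq hq' => simp only [map_add, mul_add, coeff_add, hq, hq', Polynomial.coeff_add]
    | monomial d s =>
      classical
      simp only [Polynomial.aeval_monomial, algebraMap_eq, C_mul_X_pow_eq_monomial,
        monomial_mul, Polynomial.coeff_monomial]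
      rw [coeff_monomial]
      simp only [Finsupp.single_add_single_inj hij, ite_zero_mul_ite_zero]

end

theorem Polynomial.coeff_one_add_X_pow_mul_X_pow {R : Type*} [Semiring R] {m : ℕ} (hm : 1 ≤ m)
    (i : ℕ) : ((1 + X) ^ m * X ^ i : Polynomial R).coeff (m - 1) = m.choose (i + 1) := by
  rw [coeff_mul_X_pow', add_comm, coeff_X_add_one_pow]
  split_ifs with hi
  · rw [Nat.choose_symm_of_eq_add (show m = (m - 1 - i) + (i + 1) by omega)]
  · rw [Nat.choose_eq_zero_of_lt (by omega), Nat.cast_zero]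

theorem stmt_9_general (m n k : ℕ) (hm : 1 ≤ m) (hn : 1 ≤ n) :
    MvPolynomial.coeff (Finsupp.single 0 (m - 1) + Finsupp.single 1 (n - 1))
        ((1 + X 0) ^ m * (1 + X 1) ^ n * (X 0 + X 1) ^ k : MvPolynomial (Fin 2) ℤ)
      = ∑ i ∈ Finset.range (k + 1),
          (Nat.choose m (i + 1) * Nat.choose n (k - i + 1) * Nat.choose k i : ℤ) := by
  have hsplit : ((1 + X 0) ^ m * (1 + X 1) ^ n * (X 0 + X 1) ^ k : MvPolynomial (Fin 2) ℤ)
      = ∑ i ∈ range (k + 1), C (k.choose i : ℤ) *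
          (Polynomial.aeval (X 0) ((1 + Polynomial.X) ^ m * Polynomial.X ^ i : Polynomial ℤ) *
            Polynomial.aeval (X 1) ((1 + Polynomial.X) ^ n * Polynomial.X ^ (k - i) : Polynomial ℤ))
      := by
    rw [add_pow (X 0) (X 1) k, mul_sum]
    refine sum_congr rfl fun i _ => ?_
    simp only [map_mul, map_pow, map_add, map_one, Polynomial.aeval_X, map_natCast]
    ring
  rw [hsplit, coeff_sum]
  refine sum_congr rfl fun i _ => ?_
  rw [coeff_C_mul, coeff_aeval_X_mul_aeval_X (by decide),
    Polynomial.coeff_one_add_X_pow_mul_X_pow hm, Polynomial.coeff_one_add_X_pow_mul_X_pow hn]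
  ring

theorem stmt_9 (m n k : ℕ) (hm : 1 ≤ m) (hn : 1 ≤ n) (hk : k ≤ m + n - 2) :
    MvPolynomial.coeff (Finsupp.single 0 (m - 1) + Finsupp.single 1 (n - 1))
        ((1 + X 0) ^ m * (1 + X 1) ^ n * (X 0 + X 1) ^ k : MvPolynomial (Fin 2) ℤ)
      = ∑ i ∈ Finset.range (k + 1),
          (Nat.choose m (i + 1) * Nat.choose n (k - i + 1) * Nat.choose k i : ℤ) :=
  stmt_9_general m n k hm hn
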